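/- arXiv:2112.13246 — 4 statements merged into one kernel-verified Lean document; each statement's English description precedes it below -/
import Mathlib

section
/- For any L-smooth and μ-strongly convex function h on R^d and any points x, y, z in R^d: ⟨∇h(x), z − y⟩ ≥ h(z) − h(y) + (μ/4)‖y − z‖² − L‖z − x‖². -/
/-!
Strong convexity bounds `h y` from below by the tangent at `x` plus `μ/2 ‖y - x‖²`, and the
descent lemma bounds `h z` from above by the tangent at `x` plus `L/2 ‖z - x‖²`. Subtracting, the
claim reduces to `μ/4 ‖y - z‖² ≤ μ/2 ‖y - x‖² + L/2 ‖z - x‖²`, which follows from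
`‖y - z‖² ≤ 2 ‖y - x‖² + 2 ‖z - x‖²` and `μ ≤ L`.
-/

open scoped RealInnerProductSpace

section NormedSpace

variable {E : Type*} [NormedAddCommGroup E] [NormedSpace ℝ E] {s : Set E} {f : E → ℝ}
  {f' : E →L[ℝ] ℝ} {x y : E}

theorem ConvexOn.apply_add_fderiv_le (hf : ConvexOn ℝ s f) (hx : x ∈ s) (hy : y ∈ s)
    (hfx : HasFDerivAt f f' x) : f x + f' (y - x) ≤ f y := by
  have hline : ConvexOn ℝ (Set.Icc (0 : ℝ) 1) (f ∘ AffineMap.lineMap x y) :=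
    (hf.comp_affineMap _).subset (fun t ht ↦ hf.1.segment_subset hx hy
      (segment_eq_image_lineMap ℝ x y ▸ Set.mem_image_of_mem _ ht)) (convex_Icc 0 1)
  have hderiv : HasDerivAt (f ∘ AffineMap.lineMap x y) (f' (y - x)) (0 : ℝ) :=
    HasFDerivAt.comp_hasDerivAt (0 : ℝ) (by simpa using hfx) AffineMap.hasDerivAt_lineMap
  have hslope := hline.le_slope_of_hasDerivAt (by simp) (by simp) zero_lt_one hderiv
  simp only [slope_def_field, Function.comp_apply, AffineMap.lineMap_apply_zero,
    AffineMap.lineMap_apply_one, sub_zero, div_one] at hslope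
  linarith

end NormedSpace

section InnerProductSpace

variable {E : Type*} [NormedAddCommGroup E] [InnerProductSpace ℝ E] [CompleteSpace E]
  {s : Set E} {f : E → ℝ} {g : E → E} {m L : ℝ} {x y : E}

theorem HasGradientAt.hasDerivAt_comp_add_smul {gx v : E} {t : ℝ}
    (hf : HasGradientAt f gx (x + t • v)) :
    HasDerivAt (fun t : ℝ ↦ f (x + t • v)) ⟪gx, v⟫ t := by
  have hcomp := hf.hasFDerivAt.comp_hasDerivAt t (((hasDerivAt_id t).smul_const v).const_add x)
  simp only [one_smul, InnerProductSpace.toDual_apply_apply] at hcomp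
  exact hcomp

theorem StrongConvexOn.apply_add_inner_gradient_le {gx : E} (hf : StrongConvexOn s m f)
    (hx : x ∈ s) (hy : y ∈ s) (hfx : HasGradientAt f gx x) :
    f x + ⟪gx, y - x⟫ + m / 2 * ‖y - x‖ ^ 2 ≤ f y := by
  have hφ : HasFDerivAt (fun z ↦ f z - m / 2 * ‖z‖ ^ 2)
      (InnerProductSpace.toDual ℝ E gx - (m / 2) • 2 • innerSL ℝ x) x :=
    hfx.hasFDerivAt.sub ((hasStrictFDerivAt_norm_sq x).hasFDerivAt.const_smul (m / 2))
  have htangent := (strongConvexOn_iff_convex.mp hf).apply_add_fderiv_le hx hy hφ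
  have hy_sq : ‖y‖ ^ 2 = ‖x‖ ^ 2 + 2 * ⟪x, y - x⟫ + ‖y - x‖ ^ 2 := by
    rw [← norm_add_sq_real, add_sub_cancel]
  simp only [sub_apply, smul_apply, InnerProductSpace.toDual_apply_apply, innerSL_apply_apply,
    smul_eq_mul, nsmul_eq_mul, Nat.cast_ofNat] at htangent
  rw [hy_sq] at htangent
  linarith

theorem apply_le_add_inner_gradient_add_sq_of_lipschitz (hf : ∀ z, HasGradientAt f (g z) z)
    (hg : ∀ z w, ‖g z - g w‖ ≤ L * ‖z - w‖) (x y : E) :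
    f y ≤ f x + ⟪g x, y - x⟫ + L / 2 * ‖y - x‖ ^ 2 := by
  set v := y - x
  let ψ : ℝ → ℝ := fun t ↦ f (x + t • v) - t * ⟪g x, v⟫ - L / 2 * t ^ 2 * ‖v‖ ^ 2
  have hψ (t : ℝ) : HasDerivAt ψ (⟪g (x + t • v) - g x, v⟫ - L * t * ‖v‖ ^ 2) t := by
    refine ((((hf _).hasDerivAt_comp_add_smul (x := x)).sub
      ((hasDerivAt_id t).mul_const _)).sub
      (((hasDerivAt_pow 2 t).const_mul (L / 2)).mul_const _)).congr_deriv ?_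
    simp only [inner_sub_left]
    ring
  obtain ⟨c, hc, hψc⟩ := exists_hasDerivAt_eq_slope ψ _ zero_lt_one
    (fun t _ ↦ (hψ t).continuousAt.continuousWithinAt) (fun t _ ↦ hψ t)
  have hψc_nonpos : ⟪g (x + c • v) - g x, v⟫ - L * c * ‖v‖ ^ 2 ≤ 0 := by
    have hgc : ‖g (x + c • v) - g x‖ ≤ L * (c * ‖v‖) := by
      simpa [norm_smul, abs_of_pos hc.1] using hg (x + c • v) x
    nlinarith [real_inner_le_norm (g (x + c • v) - g x) v, norm_nonneg v]
  simp only [ψ, zero_smul, one_smul, add_zero, add_sub_cancel, v] at hψc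
  linarith

end InnerProductSpace

theorem perturbed_strong_convexity {d : ℕ} (L μ : ℝ) (hμ : 0 ≤ μ) (hLμ : μ ≤ L)
    (h : EuclideanSpace ℝ (Fin d) → ℝ)
    (h' : EuclideanSpace ℝ (Fin d) → EuclideanSpace ℝ (Fin d))
    (hgrad : ∀ x, HasGradientAt h (h' x) x)
    (hsmooth : ∀ x y, ‖h' x - h' y‖ ≤ L * ‖x - y‖)
    (hsc : ConvexOn ℝ Set.univ (fun x => h x - μ / 2 * ‖x‖ ^ 2))
    (x y z : EuclideanSpace ℝ (Fin d)) :
    h z - h y + μ / 4 * ‖y - z‖ ^ 2 - L * ‖z - x‖ ^ 2 ≤ ⟪h' x, z - y⟫ := by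
  have hy := (strongConvexOn_iff_convex.mpr hsc).apply_add_inner_gradient_le
    (Set.mem_univ x) (Set.mem_univ y) (hgrad x)
  have hz := apply_le_add_inner_gradient_add_sq_of_lipschitz hgrad hsmooth x z
  have hsplit : ⟪h' x, z - y⟫ = ⟪h' x, z - x⟫ - ⟪h' x, y - x⟫ := by
    rw [← inner_sub_right, sub_sub_sub_cancel_right]
  have hyz : ‖y - z‖ ^ 2 ≤ 2 * (‖y - x‖ ^ 2 + ‖z - x‖ ^ 2) :=
    calc ‖y - z‖ ^ 2 ≤ (‖y - x‖ + ‖z - x‖) ^ 2 := by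
          gcongr
          exact norm_sub_rev z x ▸ norm_sub_le_norm_sub_add_norm_sub y x z
      _ ≤ 2 * (‖y - x‖ ^ 2 + ‖z - x‖ ^ 2) := add_sq_le
  have hμ_yz := mul_le_mul_of_nonneg_left hyz (by linarith : 0 ≤ μ / 4)
  have hμ_L := mul_le_mul_of_nonneg_right hLμ (sq_nonneg ‖z - x‖)
  linarith
end

section
/- (Optimal weighting of rounds) For fixed D, R > 0 and integer t ≥ 1, the minimum over probability vectors (p_1,...,p_t) (p_τ ≥ 0, ∑_{τ=1}^t p_τ = 1) of the objective (1 − p_t)²R² + D²∑_{τ=1}^t p_τ² is attained at p_τ = D²/(tD² + (t−1)R²) for τ < t and p_t = ((t−1)R² + D²)/(tD² + (t−1)R²), with minimal value D²·(D² + (t−1)R²)/(tD² + (t−1)R²). -/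
/-!
The objective `F` is a convex quadratic, so on the hyperplane `∑ q = 1` it is minimised exactly
where its gradient is constant (the Lagrange condition). The proposed weights `p` satisfy this
condition with multiplier `D⁴ / S`, `S = (n + 1) D² + n R²`, and expanding `F` around them gives
`F q = F p + R² (q_last - p_last)² + D² ∑ (q τ - p τ)²`.
-/

open Finset

section Lagrange

variable {ι : Type*} [Fintype ι] [DecidableEq ι]

def roundsObjective (D R : ℝ) (j : ι) (q : ι → ℝ) : ℝ :=
  (1 - q j) ^ 2 * R ^ 2 + D ^ 2 * ∑ i, q i ^ 2

theorem roundsObjective_eq_add_of_lagrange {D R μ : ℝ} {j : ι} {p q : ι → ℝ}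
    (hsum : ∑ i, q i = ∑ i, p i)
    (hp : ∀ i, D ^ 2 * p i = μ + if i = j then R ^ 2 * (1 - p j) else 0) :
    roundsObjective D R j q =
      roundsObjective D R j p + (q j - p j) ^ 2 * R ^ 2 + D ^ 2 * ∑ i, (q i - p i) ^ 2 := by
  have hcross : D ^ 2 * ∑ i, p i * (q i - p i) = R ^ 2 * (1 - p j) * (q j - p j) :=
    calc D ^ 2 * ∑ i, p i * (q i - p i) = ∑ i, D ^ 2 * p i * (q i - p i) := by
          simp only [mul_sum, mul_assoc]
      _ = μ * ∑ i, (q i - p i) + R ^ 2 * (1 - p j) * (q j - p j) := by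
          simp only [hp, add_mul, sum_add_distrib, mul_sum, ite_mul, zero_mul, sum_ite_eq',
            mem_univ, if_true]
      _ = R ^ 2 * (1 - p j) * (q j - p j) := by
          rw [sum_sub_distrib, hsum, sub_self, mul_zero, zero_add]
  have hsq : ∑ i, q i ^ 2 = ∑ i, p i ^ 2 + 2 * ∑ i, p i * (q i - p i) + ∑ i, (q i - p i) ^ 2 := by
    rw [mul_sum, ← sum_add_distrib, ← sum_add_distrib]
    exact sum_congr rfl fun i _ => by ring
  unfold roundsObjective
  rw [hsq]
  linear_combination 2 * hcross

theorem roundsObjective_le_of_lagrange {D R μ : ℝ} {j : ι} {p q : ι → ℝ}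
    (hsum : ∑ i, q i = ∑ i, p i)
    (hp : ∀ i, D ^ 2 * p i = μ + if i = j then R ^ 2 * (1 - p j) else 0) :
    roundsObjective D R j p ≤ roundsObjective D R j q := by
  rw [roundsObjective_eq_add_of_lagrange hsum hp]
  have : 0 ≤ D ^ 2 * ∑ i, (q i - p i) ^ 2 := by positivity
  nlinarith [sq_nonneg ((q j - p j) * R)]

theorem sum_ite_eq_of_card_eq_succ {M : Type*} [AddCommMonoid M] {n : ℕ}
    (hcard : Fintype.card ι = n + 1) (j : ι) (a b : M) :
    ∑ i, (if i = j then a else b) = a + n • b := by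
  rw [Fintype.sum_eq_add_sum_compl j, if_pos rfl,
    sum_congr rfl fun i hi => if_neg (by simpa using hi), sum_const, card_compl, card_singleton,
    hcard, Nat.add_sub_cancel]

end Lagrange

section OptimalWeights

variable {ι : Type*} [DecidableEq ι]

noncomputable def optimalWeights (n : ℕ) (D R : ℝ) (j : ι) : ι → ℝ := fun i =>
  if i = j then ((n : ℝ) * R ^ 2 + D ^ 2) / (((n : ℝ) + 1) * D ^ 2 + (n : ℝ) * R ^ 2)
  else D ^ 2 / (((n : ℝ) + 1) * D ^ 2 + (n : ℝ) * R ^ 2)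

variable {n : ℕ} {D R : ℝ} {j : ι}

theorem optimalWeights_nonneg (i : ι) : 0 ≤ optimalWeights n D R j i := by
  unfold optimalWeights
  split_ifs <;> positivity

theorem optimalWeights_lagrange (hD : D ≠ 0) (i : ι) :
    D ^ 2 * optimalWeights n D R j i =
      D ^ 4 / (((n : ℝ) + 1) * D ^ 2 + n * R ^ 2) +
        if i = j then R ^ 2 * (1 - optimalWeights n D R j j) else 0 := by
  have hS : ((n : ℝ) + 1) * D ^ 2 + n * R ^ 2 ≠ 0 := by positivity
  unfold optimalWeights
  rcases eq_or_ne i j with rfl | hij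
  · simp only [↓reduceIte]
    field_simp
    ring
  · simp only [if_neg hij, add_zero]
    ring

variable [Fintype ι]

theorem sum_optimalWeights (hcard : Fintype.card ι = n + 1) (hD : D ≠ 0) :
    ∑ i, optimalWeights n D R j i = 1 := by
  have hS : ((n : ℝ) + 1) * D ^ 2 + n * R ^ 2 ≠ 0 := by positivity
  simp only [optimalWeights, sum_ite_eq_of_card_eq_succ hcard, nsmul_eq_mul]
  field_simp
  ring

theorem roundsObjective_optimalWeights (hcard : Fintype.card ι = n + 1) (hD : D ≠ 0) :
    roundsObjective D R j (optimalWeights n D R j) =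
      D ^ 2 * (D ^ 2 + n * R ^ 2) / (((n : ℝ) + 1) * D ^ 2 + n * R ^ 2) := by
  have hS : ((n : ℝ) + 1) * D ^ 2 + n * R ^ 2 ≠ 0 := by positivity
  simp only [roundsObjective, optimalWeights, apply_ite (· ^ 2), if_true,
    sum_ite_eq_of_card_eq_succ hcard, nsmul_eq_mul]
  field_simp
  ring

end OptimalWeights

theorem optimal_weighting_of_rounds_general (n : ℕ) (D R : ℝ) (hD : 0 < D) :
    (∀ q : Fin (n + 1) → ℝ, (∀ τ, 0 ≤ q τ) → ∑ τ, q τ = 1 →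
      D ^ 2 * (D ^ 2 + (n : ℝ) * R ^ 2) / (((n : ℝ) + 1) * D ^ 2 + (n : ℝ) * R ^ 2) ≤
        (1 - q (Fin.last n)) ^ 2 * R ^ 2 + D ^ 2 * ∑ τ, q τ ^ 2) ∧
    (∀ p : Fin (n + 1) → ℝ,
      (p = fun τ => if τ = Fin.last n then
          ((n : ℝ) * R ^ 2 + D ^ 2) / (((n : ℝ) + 1) * D ^ 2 + (n : ℝ) * R ^ 2)
        else D ^ 2 / (((n : ℝ) + 1) * D ^ 2 + (n : ℝ) * R ^ 2)) →
      (∀ τ, 0 ≤ p τ) ∧ ∑ τ, p τ = 1 ∧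
      (1 - p (Fin.last n)) ^ 2 * R ^ 2 + D ^ 2 * ∑ τ, p τ ^ 2 =
        D ^ 2 * (D ^ 2 + (n : ℝ) * R ^ 2) / (((n : ℝ) + 1) * D ^ 2 + (n : ℝ) * R ^ 2)) := by
  have hcard : Fintype.card (Fin (n + 1)) = n + 1 := Fintype.card_fin _
  refine ⟨fun q _ hq => ?_, fun p hp => ?_⟩
  · rw [← roundsObjective_optimalWeights hcard hD.ne']
    exact roundsObjective_le_of_lagrange (hq.trans (sum_optimalWeights hcard hD.ne').symm)
      (optimalWeights_lagrange hD.ne')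
  · subst hp
    exact ⟨optimalWeights_nonneg, sum_optimalWeights hcard hD.ne',
      roundsObjective_optimalWeights hcard hD.ne'⟩

theorem optimal_weighting_of_rounds (n : ℕ) (D R : ℝ) (hD : 0 < D) (hR : 0 < R) :
    (∀ q : Fin (n + 1) → ℝ, (∀ τ, 0 ≤ q τ) → ∑ τ, q τ = 1 →
      D ^ 2 * (D ^ 2 + (n : ℝ) * R ^ 2) / (((n : ℝ) + 1) * D ^ 2 + (n : ℝ) * R ^ 2) ≤
        (1 - q (Fin.last n)) ^ 2 * R ^ 2 + D ^ 2 * ∑ τ, q τ ^ 2) ∧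
    (∀ p : Fin (n + 1) → ℝ,
      (p = fun τ => if τ = Fin.last n then
          ((n : ℝ) * R ^ 2 + D ^ 2) / (((n : ℝ) + 1) * D ^ 2 + (n : ℝ) * R ^ 2)
        else D ^ 2 / (((n : ℝ) + 1) * D ^ 2 + (n : ℝ) * R ^ 2)) →
      (∀ τ, 0 ≤ p τ) ∧ ∑ τ, p τ = 1 ∧
      (1 - p (Fin.last n)) ^ 2 * R ^ 2 + D ^ 2 * ∑ τ, p τ ^ 2 =
        D ^ 2 * (D ^ 2 + (n : ℝ) * R ^ 2) / (((n : ℝ) + 1) * D ^ 2 + (n : ℝ) * R ^ 2)) :=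
  optimal_weighting_of_rounds_general n D R hD
end

section
/- (Stateless variance is smaller) For all G, D, R ≥ 0 with not all zero, the stateless variance constant c_stateless = (G² + D²)R²/(G² + D² + R²) is at most the stateful variance constant c_normal = G² + D²R²/(R² + D²). -/
/-! The map `x ↦ x * c / (x + c)` (the parallel sum of `x` and `c`) is concave on `[0, ∞)`
and vanishes at `0`, hence subadditive; it is also bounded by `x`. Splitting the stateless
constant along `G² + D²` and bounding the `G²` part by `G²` gives the stateful constant. -/

lemma mul_div_add_le_left {x y : ℝ} (hx : 0 ≤ x) (hy : 0 ≤ y) : x * y / (x + y) ≤ x := by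
  rcases (add_nonneg hx hy).eq_or_lt with h | h
  · rw [← h, div_zero]
    exact hx
  · rw [div_le_iff₀ h]
    nlinarith [mul_nonneg hx hx]

lemma add_mul_div_add_le {a b c : ℝ} (ha : 0 ≤ a) (hb : 0 ≤ b) (hc : 0 ≤ c) :
    (a + b) * c / (a + b + c) ≤ a * c / (a + c) + b * c / (b + c) := by
  rcases hc.eq_or_lt with rfl | hc
  · simp
  have hac : 0 < a + c := by positivity
  have hbc : 0 < b + c := by positivity
  rw [div_add_div _ _ hac.ne' hbc.ne', div_le_div_iff₀ (by positivity) (by positivity)]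
  nlinarith [mul_nonneg (mul_nonneg ha hb) (mul_nonneg hc.le (add_nonneg (add_nonneg ha hb) hc.le))]

theorem stateless_variance_le_stateful_general (G D R : ℝ) :
    (G ^ 2 + D ^ 2) * R ^ 2 / (G ^ 2 + D ^ 2 + R ^ 2) ≤
      G ^ 2 + D ^ 2 * R ^ 2 / (R ^ 2 + D ^ 2) := by
  calc (G ^ 2 + D ^ 2) * R ^ 2 / (G ^ 2 + D ^ 2 + R ^ 2)
      ≤ G ^ 2 * R ^ 2 / (G ^ 2 + R ^ 2) + D ^ 2 * R ^ 2 / (D ^ 2 + R ^ 2) :=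
        add_mul_div_add_le (sq_nonneg G) (sq_nonneg D) (sq_nonneg R)
    _ ≤ G ^ 2 + D ^ 2 * R ^ 2 / (R ^ 2 + D ^ 2) := by
        rw [add_comm (D ^ 2) (R ^ 2)]
        gcongr
        exact mul_div_add_le_left (sq_nonneg G) (sq_nonneg R)

theorem stateless_variance_le_stateful (G D R : ℝ) (hG : 0 ≤ G) (hD : 0 ≤ D) (hR : 0 ≤ R)
    (hne : ¬(G = 0 ∧ D = 0 ∧ R = 0)) :
    (G ^ 2 + D ^ 2) * R ^ 2 / (G ^ 2 + D ^ 2 + R ^ 2) ≤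
      G ^ 2 + D ^ 2 * R ^ 2 / (R ^ 2 + D ^ 2) :=
  stateless_variance_le_stateful_general G D R
end

section
/- (Step-size condition for contraction) Let c ≥ 1, L > 0, and η satisfy 0 < η ≤ (√(3η_g² + 4cη_g⁴) − √(4cη_g⁴))/(6L√c) with η_g = 1. Writing K η_l = η, it holds that 1 − 4K²η_l²L²c > 0 and the quadratic inequality −2η + 16η²Lc + 16K²ηη_l²L²c(1 + 4ηLc)/(1 − 4K²η_l²L²c) ≤ 0 is satisfied. -/
/-!
With `η = K ηₗ` every `K² ηₗ²` becomes `η²`, and with `u = η L √c` the step-size bound says that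
`u` is at most the positive root of `12 u² + 8 √c u = 1`. That gives `4 u² < 1`, and after clearing
this positive denominator the quadratic inequality is `2 η (1 - 12 u² - 8 √c u) ≥ 0`.
-/

theorem stepsize_quadratic_le_one_of_le {c L η : ℝ} (hc : 0 < c) (hL : 0 < L) (hη : 0 ≤ η)
    (hbound : η ≤ (Real.sqrt (3 + 4 * c) - Real.sqrt (4 * c)) / (6 * L * Real.sqrt c)) :
    12 * η ^ 2 * L ^ 2 * c + 8 * η * L * c ≤ 1 := by
  have hs : 0 < Real.sqrt c := Real.sqrt_pos.2 hc
  have hsq : Real.sqrt c ^ 2 = c := Real.sq_sqrt hc.le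
  have hsqrt4 : Real.sqrt (4 * c) = 2 * Real.sqrt c := by
    rw [Real.sqrt_mul' 4 hc.le, show (4 : ℝ) = 2 ^ 2 by norm_num, Real.sqrt_sq zero_le_two]
  rw [hsqrt4, le_div_iff₀ (by positivity)] at hbound
  have hroot : 6 * η * L * Real.sqrt c + 2 * Real.sqrt c ≤ Real.sqrt (3 + 4 * c) := by
    linarith
  have hsquared := (Real.le_sqrt (by positivity) (by positivity)).1 hroot
  have hexpand : (6 * η * L * Real.sqrt c + 2 * Real.sqrt c) ^ 2
      = 36 * η ^ 2 * L ^ 2 * c + 24 * η * L * c + 4 * c := by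
    linear_combination (36 * η ^ 2 * L ^ 2 + 24 * η * L + 4) * hsq
  linarith

theorem contraction_of_quadratic_le_one {c L η : ℝ} (hη : 0 ≤ η)
    (hD : 0 < 1 - 4 * η ^ 2 * L ^ 2 * c)
    (hkey : 12 * η ^ 2 * L ^ 2 * c + 8 * η * L * c ≤ 1) :
    -2 * η + 16 * η ^ 2 * L * c +
        16 * η ^ 3 * L ^ 2 * c * (1 + 4 * η * L * c) / (1 - 4 * η ^ 2 * L ^ 2 * c) ≤ 0 := by
  have hfactor : (2 * η - 16 * η ^ 2 * L * c) * (1 - 4 * η ^ 2 * L ^ 2 * c)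
      - 16 * η ^ 3 * L ^ 2 * c * (1 + 4 * η * L * c)
      = 2 * η * (1 - (12 * η ^ 2 * L ^ 2 * c + 8 * η * L * c)) := by ring
  have hfrac : 16 * η ^ 3 * L ^ 2 * c * (1 + 4 * η * L * c) / (1 - 4 * η ^ 2 * L ^ 2 * c)
      ≤ 2 * η - 16 * η ^ 2 * L * c := by
    rw [div_le_iff₀ hD]
    linarith [mul_nonneg hη (sub_nonneg.2 hkey)]
  linarith

theorem stepsize_condition_for_contraction (c L : ℝ) (hc : 1 ≤ c) (hL : 0 < L)
    (K : ℕ) (hK : 1 ≤ K) (ηl η : ℝ) (hηl : 0 < ηl) (hη : η = (K : ℝ) * ηl)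
    (hbound : η ≤ (Real.sqrt (3 + 4 * c) - Real.sqrt (4 * c)) / (6 * L * Real.sqrt c)) :
    0 < 1 - 4 * (K : ℝ) ^ 2 * ηl ^ 2 * L ^ 2 * c ∧
      -2 * η + 16 * η ^ 2 * L * c +
          16 * (K : ℝ) ^ 2 * η * ηl ^ 2 * L ^ 2 * c * (1 + 4 * η * L * c) /
            (1 - 4 * (K : ℝ) ^ 2 * ηl ^ 2 * L ^ 2 * c) ≤ 0 := by
  have hc0 : 0 < c := zero_lt_one.trans_le hc
  have hη0 : 0 < η := hη ▸ mul_pos (by exact_mod_cast hK) hηl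
  have hkey := stepsize_quadratic_le_one_of_le hc0 hL hη0.le hbound
  have hD : 0 < 1 - 4 * η ^ 2 * L ^ 2 * c := by
    linarith [show 0 ≤ η * L * c by positivity]
  have hdenom : 1 - 4 * (K : ℝ) ^ 2 * ηl ^ 2 * L ^ 2 * c = 1 - 4 * η ^ 2 * L ^ 2 * c := by
    rw [hη]; ring
  have hnumer : 16 * (K : ℝ) ^ 2 * η * ηl ^ 2 * L ^ 2 * c = 16 * η ^ 3 * L ^ 2 * c := by
    rw [hη]; ring
  rw [hdenom, hnumer]
  exact ⟨hD, contraction_of_quadratic_le_one hη0.le hD hkey⟩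
end
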